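/- arXiv:2407.18844 — 5 statements merged into one kernel-verified Lean document; each statement's English description precedes it below -/
import Mathlib

section
/- If ω_d : ℝ → ℝ is continuously differentiable and persistently exciting with parameters μ, T > 0 (i.e., ∫_t^{t+T} ω_d(s)² ds ≥ μ for all t ≥ 0), and |ω_d| ≤ ω̄, then the function Υ(t) := 1 + 2ω̄²T − (2/T)∫_t^{t+T}∫_t^m ω_d(s)² ds dm satisfies Υ'(t) ≤ −2μ/T + 2ω_d(t)² for all t ≥ 0. -/
/-! With Φ a primitive of f, the double integral ∫_t^{t+T} ∫_t^m f equals ∫_t^{t+T} Φ − T Φ(t),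
so its derivative is ∫_t^{t+T} f − T f(t). For f = ω_d², persistency of excitation bounds the
integral from below by μ, which gives the bound on Υ'. -/

open MeasureTheory intervalIntegral

section

variable {E : Type*} [NormedAddCommGroup E] [NormedSpace ℝ E] [CompleteSpace E] {f : ℝ → E}

theorem Continuous.hasDerivAt_integral_add_right (hf : Continuous f) (T t : ℝ) :
    HasDerivAt (fun t => ∫ s in t..t + T, f s) (f (t + T) - f t) t := by
  have hprim (x : ℝ) : HasDerivAt (fun u => ∫ s in (0 : ℝ)..u, f s) (f x) x :=
    (hf.integral_hasStrictDerivAt 0 x).hasDerivAt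
  have hsplit : (fun t => ∫ s in t..t + T, f s) =
      fun t => (∫ s in (0 : ℝ)..t + T, f s) - ∫ s in (0 : ℝ)..t, f s := by
    funext t
    exact (integral_interval_sub_left (hf.intervalIntegrable _ _) (hf.intervalIntegrable _ _)).symm
  rw [hsplit]
  exact ((hprim (t + T)).comp_add_const t T).sub (hprim t)

theorem Continuous.hasDerivAt_integral_integral (hf : Continuous f) (T t : ℝ) :
    HasDerivAt (fun t => ∫ m in t..t + T, ∫ s in t..m, f s)
      ((∫ s in t..t + T, f s) - T • f t) t := by
  set Φ : ℝ → E := fun u => ∫ s in (0 : ℝ)..u, f s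
  have hΦ (x : ℝ) : HasDerivAt Φ (f x) x := (hf.integral_hasStrictDerivAt 0 x).hasDerivAt
  have hΦc : Continuous Φ := continuous_iff_continuousAt.2 fun x => (hΦ x).continuousAt
  have hsplit : (fun t => ∫ m in t..t + T, ∫ s in t..m, f s) =
      fun t => (∫ m in t..t + T, Φ m) - T • Φ t := by
    funext t
    have hinner (m : ℝ) : ∫ s in t..m, f s = Φ m - Φ t :=
      (integral_interval_sub_left (hf.intervalIntegrable _ _) (hf.intervalIntegrable _ _)).symm
    simp only [hinner, integral_sub (hΦc.intervalIntegrable _ _) intervalIntegrable_const,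
      intervalIntegral.integral_const, add_sub_cancel_left]
  have hΦshift : Φ (t + T) - Φ t = ∫ s in t..t + T, f s :=
    integral_interval_sub_left (hf.intervalIntegrable _ _) (hf.intervalIntegrable _ _)
  rw [hsplit, ← hΦshift]
  exact (hΦc.hasDerivAt_integral_add_right T t).sub ((hΦ t).const_smul T)

end

theorem upsilon_deriv_bound_general
    (ωd : ℝ → ℝ) (ωbar μ T : ℝ) (hT : 0 < T)
    (hC1 : ContDiff ℝ 1 ωd)
    (hPE : ∀ t : ℝ, 0 ≤ t → μ ≤ ∫ s in t..(t + T), (ωd s) ^ 2)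
    (Υ : ℝ → ℝ)
    (hΥ : ∀ t : ℝ, Υ t = 1 + 2 * ωbar ^ 2 * T -
      (2 / T) * ∫ m in t..(t + T), (∫ s in t..m, (ωd s) ^ 2)) :
    ∀ t : ℝ, 0 ≤ t → ∃ d : ℝ, HasDerivAt Υ d t ∧
      d ≤ -(2 * μ) / T + 2 * (ωd t) ^ 2 := by
  intro t ht
  have hsq : Continuous fun s => ωd s ^ 2 := hC1.continuous.pow 2
  refine ⟨-(2 / T) * ((∫ s in t..t + T, ωd s ^ 2) - T * ωd t ^ 2), ?_, ?_⟩
  · rw [funext hΥ]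
    simpa using ((hsq.hasDerivAt_integral_integral T t).const_mul (2 / T)).const_sub
      (1 + 2 * ωbar ^ 2 * T)
  · have hμI : 2 / T * μ ≤ 2 / T * ∫ s in t..t + T, ωd s ^ 2 :=
      mul_le_mul_of_nonneg_left (hPE t ht) (by positivity)
    calc -(2 / T) * ((∫ s in t..t + T, ωd s ^ 2) - T * ωd t ^ 2)
        = -(2 / T * ∫ s in t..t + T, ωd s ^ 2) + 2 * ωd t ^ 2 := by field_simp; ring
      _ ≤ -(2 * μ) / T + 2 * ωd t ^ 2 := by rw [neg_div, mul_div_right_comm]; linarith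

theorem upsilon_deriv_bound
    (ωd : ℝ → ℝ) (ωbar μ T : ℝ) (hT : 0 < T) (hμ : 0 < μ)
    (hC1 : ContDiff ℝ 1 ωd)
    (hbnd : ∀ t : ℝ, |ωd t| ≤ ωbar)
    (hPE : ∀ t : ℝ, 0 ≤ t → μ ≤ ∫ s in t..(t + T), (ωd s) ^ 2)
    (Υ : ℝ → ℝ)
    (hΥ : ∀ t : ℝ, Υ t = 1 + 2 * ωbar ^ 2 * T -
      (2 / T) * ∫ m in t..(t + T), (∫ s in t..m, (ωd s) ^ 2)) :
    ∀ t : ℝ, 0 ≤ t → ∃ d : ℝ, HasDerivAt Υ d t ∧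
      d ≤ -(2 * μ) / T + 2 * (ωd t) ^ 2 :=
  upsilon_deriv_bound_general ωd ωbar μ T hT hC1 hPE Υ hΥ
end

section
/- Consider the linear time-varying system ė_x = −k_x e_x + ω_d(t) e_y, ė_y = −ω_d(t) e_x, with k_x > 0, ω_d continuously differentiable, |ω_d| ≤ ω̄, |ω_d'| ≤ ω̄, and ω_d persistently exciting with parameters μ, T. Let W₁(t,e) := (1/2)(Υ(t)+α)|e|² − ω_d(t) e_x e_y with Υ(t) := 1 + 2ω̄²T − (2/T)∫_t^{t+T}∫_t^m ω_d² and α ≥ max{ω̄, (2ω̄²/k_x)(1 + (T/(4μ))(1+k_x)²)}. Then along any solution, d/dt W₁(t, e(t)) ≤ −(μ/(2T))|e(t)|². -/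
/-!
Differentiating the window integral gives `Υ' = -(2/T) (∫_t^{t+T} ω_d² - T ω_d²)`, so along
solutions
`Ẇ₁ = -(1/T) (∫_t^{t+T} ω_d²) |e|² + 2 ω_d² e_x² - (Υ + α) k_x e_x² + (k_x ω_d - ω_d') e_x e_y`.
Persistency of excitation bounds the first term by `-(μ/T) |e|²`. Young's inequality splits the
cross term into `(μ/2T) e_y²` and a multiple of `e_x²` which, with `2 ω̄² e_x²`, is dominated by
`α k_x e_x²` for the given choice of `α`. Finally `Υ ≥ 0`, as the double integral is at most
`ω̄² T² / 2`.
-/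

open MeasureTheory intervalIntegral

theorem Continuous.hasDerivAt_integral_integral_window {f : ℝ → ℝ} (hf : Continuous f)
    (T u : ℝ) :
    HasDerivAt (fun v => ∫ m in v..v + T, ∫ s in v..m, f s)
      ((∫ s in u..u + T, f s) - T * f u) u := by
  set Φ : ℝ → ℝ := fun x => ∫ s in (0 : ℝ)..x, f s
  have hΦ : ∀ x, HasDerivAt Φ (f x) x := fun x => (hf.integral_hasStrictDerivAt 0 x).hasDerivAt
  have hΦc : Continuous Φ := continuous_iff_continuousAt.mpr fun x => (hΦ x).continuousAt
  set Ψ : ℝ → ℝ := fun x => ∫ m in (0 : ℝ)..x, Φ m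
  have hΨ : ∀ x, HasDerivAt Ψ (Φ x) x := fun x =>
    (hΦc.integral_hasStrictDerivAt 0 x).hasDerivAt
  have hint : ∀ {g : ℝ → ℝ}, Continuous g → ∀ a b, ∫ x in a..b, g x =
      (∫ x in (0 : ℝ)..b, g x) - ∫ x in (0 : ℝ)..a, g x := fun hg a b =>
    (integral_interval_sub_left (hg.intervalIntegrable _ _) (hg.intervalIntegrable _ _)).symm
  have hform : (fun v => ∫ m in v..v + T, ∫ s in v..m, f s)
      = fun v => Ψ (v + T) - Ψ v - T * Φ v := by
    funext v
    simp_rw [hint hf v]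
    rw [intervalIntegral.integral_sub (hΦc.intervalIntegrable _ _) intervalIntegrable_const,
      intervalIntegral.integral_const, hint hΦc, smul_eq_mul, add_sub_cancel_left]
  rw [hform, hint hf]
  exact ((hΨ (u + T)).comp_add_const u T |>.sub (hΨ u)).sub ((hΦ u).const_mul T)

theorem integral_integral_window_le {f : ℝ → ℝ} {c T : ℝ} (hf : Continuous f)
    (hfc : ∀ s, f s ≤ c) (hT : 0 ≤ T) (u : ℝ) :
    ∫ m in u..u + T, ∫ s in u..m, f s ≤ c * T ^ 2 / 2 := by
  have hinner : ∀ m ∈ Set.Icc u (u + T), ∫ s in u..m, f s ≤ c * (m - u) := fun m hm => by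
    simpa [mul_comm] using integral_mono_on (μ := volume) hm.1 (hf.intervalIntegrable u m)
      intervalIntegrable_const fun s _ => hfc s
  have hprim : Continuous fun m => ∫ s in u..m, f s :=
    continuous_primitive (fun a b => hf.intervalIntegrable a b) u
  calc ∫ m in u..u + T, ∫ s in u..m, f s
      ≤ ∫ m in u..u + T, c * (m - u) :=
        integral_mono_on (by linarith) (hprim.intervalIntegrable _ _)
          ((by fun_prop : Continuous fun m => c * (m - u)).intervalIntegrable _ _) hinner
    _ = c * T ^ 2 / 2 := by
        rw [intervalIntegral.integral_const_mul, integral_comp_sub_right (fun m => m), integral_id]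
        ring

theorem mul_mul_le_of_abs_le {a c ε : ℝ} (hε : 0 < ε) (ha : |a| ≤ c) (x y : ℝ) :
    a * x * y ≤ c ^ 2 / (2 * ε) * x ^ 2 + ε / 2 * y ^ 2 := by
  have hsq : a ^ 2 ≤ c ^ 2 := sq_le_sq.mpr (ha.trans (le_abs_self c))
  have hgap : c ^ 2 / (2 * ε) * x ^ 2 + ε / 2 * y ^ 2 - a * x * y
      = ((a * x - ε * y) ^ 2 + (c ^ 2 - a ^ 2) * x ^ 2) / (2 * ε) := by
    field_simp
    ring
  have : 0 ≤ (c ^ 2 - a ^ 2) * x ^ 2 := mul_nonneg (sub_nonneg.mpr hsq) (sq_nonneg x)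
  have : 0 ≤ c ^ 2 / (2 * ε) * x ^ 2 + ε / 2 * y ^ 2 - a * x * y := by
    rw [hgap]
    positivity
  linarith

theorem hasDerivAt_W₁_along_solution {Υ ω ex ey : ℝ → ℝ} {Υ' ω' kx α t : ℝ}
    (hΥ : HasDerivAt Υ Υ' t) (hω : HasDerivAt ω ω' t)
    (hex : HasDerivAt ex (-kx * ex t + ω t * ey t) t)
    (hey : HasDerivAt ey (-(ω t) * ex t) t) :
    HasDerivAt (fun s => (1 / 2) * (Υ s + α) * (ex s ^ 2 + ey s ^ 2) - ω s * ex s * ey s)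
      (Υ' / 2 * (ex t ^ 2 + ey t ^ 2) - (Υ t + α) * kx * ex t ^ 2
        + (kx * ω t - ω') * ex t * ey t + ω t ^ 2 * (ex t ^ 2 - ey t ^ 2)) t := by
  refine ((((hΥ.add_const α).const_mul (1 / 2)).fun_mul
    ((hex.fun_pow 2).fun_add (hey.fun_pow 2))).fun_sub
    ((hω.fun_mul hex).fun_mul hey)).congr_deriv ?_
  push_cast
  ring

theorem W₁_rate_le {kx ωbar μ T α w w' P u x y : ℝ}
    (hkx : 0 < kx) (hT : 0 < T) (hμ : 0 < μ) (hw : |w| ≤ ωbar) (hw' : |w'| ≤ ωbar)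
    (hP : μ ≤ P) (hu : 0 ≤ u)
    (hα : 2 * ωbar ^ 2 / kx * (1 + T / (4 * μ) * (1 + kx) ^ 2) ≤ α) :
    -(P / T) * (x ^ 2 + y ^ 2) + 2 * w ^ 2 * x ^ 2 - (u + α) * kx * x ^ 2
      + (kx * w - w') * x * y ≤ -(μ / (2 * T)) * (x ^ 2 + y ^ 2) := by
  have hw2 : w ^ 2 ≤ ωbar ^ 2 := sq_le_sq.mpr (hw.trans (le_abs_self _))
  have hcoef : |kx * w - w'| ≤ (1 + kx) * ωbar := by
    calc |kx * w - w'| ≤ kx * |w| + |w'| := by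
          simpa [abs_mul, abs_of_pos hkx] using abs_sub (kx * w) w'
      _ ≤ (1 + kx) * ωbar := by linarith [mul_le_mul_of_nonneg_left hw hkx.le]
  have hcross := mul_mul_le_of_abs_le (div_pos hμ hT) hcoef x y
  have hgain : 2 * ωbar ^ 2 + ((1 + kx) * ωbar) ^ 2 / (2 * (μ / T)) ≤ α * kx := by
    have := mul_le_mul_of_nonneg_right hα hkx.le
    field_simp at this ⊢
    linarith
  have hdecay : μ / T ≤ P / T := by gcongr
  have hux : 0 ≤ u * kx * x ^ 2 := by positivity
  have hx : 0 ≤ μ / (2 * T) * x ^ 2 := by positivity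
  linear_combination
    (x ^ 2 + y ^ 2) * hdecay + x ^ 2 * hgain + 2 * x ^ 2 * hw2 + hcross + hux + hx

theorem W1_strict_lyapunov
    (ωd : ℝ → ℝ) (kx ωbar μ T α : ℝ)
    (hkx : 0 < kx) (hT : 0 < T) (hμ : 0 < μ)
    (hC1 : ContDiff ℝ 1 ωd)
    (hωd : ∀ t : ℝ, |ωd t| ≤ ωbar)
    (hωd' : ∀ t : ℝ, |deriv ωd t| ≤ ωbar)
    (hPE : ∀ t : ℝ, 0 ≤ t → μ ≤ ∫ s in t..(t + T), (ωd s) ^ 2)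
    (hα : max ωbar ((2 * ωbar ^ 2 / kx) * (1 + (T / (4 * μ)) * (1 + kx) ^ 2)) ≤ α)
    (Υ : ℝ → ℝ)
    (hΥ : ∀ t : ℝ, Υ t = 1 + 2 * ωbar ^ 2 * T -
      (2 / T) * ∫ m in t..(t + T), (∫ s in t..m, (ωd s) ^ 2))
    (W₁ : ℝ → ℝ → ℝ → ℝ)
    (hW₁ : ∀ t ex ey : ℝ,
      W₁ t ex ey = (1 / 2) * (Υ t + α) * (ex ^ 2 + ey ^ 2) - ωd t * ex * ey)
    (ex ey : ℝ → ℝ)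
    (hex : ∀ t : ℝ, HasDerivAt ex (-kx * ex t + ωd t * ey t) t)
    (hey : ∀ t : ℝ, HasDerivAt ey (-(ωd t) * ex t) t) :
    ∀ t : ℝ, 0 ≤ t → ∃ d : ℝ,
      HasDerivAt (fun s => W₁ s (ex s) (ey s)) d t ∧
      d ≤ -(μ / (2 * T)) * ((ex t) ^ 2 + (ey t) ^ 2) := by
  intro t ht
  have hω2 : Continuous fun s => ωd s ^ 2 := by fun_prop
  have hΥ' : HasDerivAt Υ (-(2 / T * ((∫ s in t..t + T, ωd s ^ 2) - T * ωd t ^ 2))) t := by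
    rw [show Υ = _ from funext hΥ]
    exact ((hω2.hasDerivAt_integral_integral_window T t).const_mul _).const_sub _
  have hΥ0 : 0 ≤ Υ t := by
    have hD := integral_integral_window_le hω2
      (fun s => sq_le_sq.mpr ((hωd s).trans (le_abs_self ωbar))) hT.le t
    have : 2 / T * (∫ m in t..t + T, ∫ s in t..m, ωd s ^ 2) ≤ ωbar ^ 2 * T :=
      calc _ ≤ 2 / T * (ωbar ^ 2 * T ^ 2 / 2) := by gcongr
        _ = ωbar ^ 2 * T := by field_simp
    rw [hΥ t]
    linarith [mul_nonneg (sq_nonneg ωbar) hT.le]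
  simp only [hW₁]
  refine ⟨_, hasDerivAt_W₁_along_solution hΥ'
    ((hC1.differentiable one_ne_zero t).hasDerivAt) (hex t) (hey t), ?_⟩
  calc _ = -((∫ s in t..t + T, ωd s ^ 2) / T) * (ex t ^ 2 + ey t ^ 2) + 2 * ωd t ^ 2 * ex t ^ 2
        - (Υ t + α) * kx * ex t ^ 2 + (kx * ωd t - deriv ωd t) * ex t * ey t := by
        field_simp
        ring
    _ ≤ _ := W₁_rate_le hkx hT hμ (hωd t) (hωd' t) (hPE t ht) hΥ0
        ((le_max_right _ _).trans hα)
end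

section
/- (Small-gain theorem with quadratic supply rates.) Let V₁ : ℝⁿ → ℝ and V₂ : ℝᵐ → ℝ be C¹, proper (radially unbounded), nonnegative, with V_i(0) = 0, and suppose along all solutions of the interconnected system ẋ₁ = f₁(x₁, −h₂(x₂)), ẋ₂ = f₂(x₂, h₁(x₁)) we have V̇₁ ≤ (γ₁²/2)|h₂(x₂)|² − (1/2)|h₁(x₁)|² and V̇₂ ≤ (γ₂²/2)|h₁(x₁)|² − (1/2)|h₂(x₂)|², with γ₁γ₂ < 1. Then for λ with γ₁ < λ < 1/γ₂, the function V := V₁ + λ²V₂ satisfies V̇ ≤ −((1−λ²γ₂²)/2)|h₁(x₁)|² − ((λ²−γ₁²)/2)|h₂(x₂)|² ≤ 0 along solutions, so V is nonincreasing and all solutions are bounded. -/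
open Filter Topology

theorem small_gain_theorem
    {n m p q : ℕ}
    (f₁ : EuclideanSpace ℝ (Fin n) → EuclideanSpace ℝ (Fin q) → EuclideanSpace ℝ (Fin n))
    (f₂ : EuclideanSpace ℝ (Fin m) → EuclideanSpace ℝ (Fin p) → EuclideanSpace ℝ (Fin m))
    (h₁ : EuclideanSpace ℝ (Fin n) → EuclideanSpace ℝ (Fin p))
    (h₂ : EuclideanSpace ℝ (Fin m) → EuclideanSpace ℝ (Fin q))
    (hf₁ : Continuous fun z : _ × _ => f₁ z.1 z.2)
    (hf₂ : Continuous fun z : _ × _ => f₂ z.1 z.2)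
    (hh₁ : Continuous h₁) (hh₂ : Continuous h₂)
    (V₁ : EuclideanSpace ℝ (Fin n) → ℝ) (V₂ : EuclideanSpace ℝ (Fin m) → ℝ)
    (hV₁C1 : ContDiff ℝ 1 V₁) (hV₂C1 : ContDiff ℝ 1 V₂)
    (hV₁proper : Tendsto V₁ (cocompact _) atTop)
    (hV₂proper : Tendsto V₂ (cocompact _) atTop)
    (hV₁nonneg : ∀ x, 0 ≤ V₁ x) (hV₂nonneg : ∀ x, 0 ≤ V₂ x)
    (hV₁0 : V₁ 0 = 0) (hV₂0 : V₂ 0 = 0)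
    (γ₁ γ₂ lam : ℝ) (hγ₁ : 0 ≤ γ₁) (hγ₂ : 0 ≤ γ₂)
    (hsg : γ₁ * γ₂ < 1) (hlam₁ : γ₁ < lam) (hlam₂ : lam * γ₂ < 1)
    (x₁ : ℝ → EuclideanSpace ℝ (Fin n)) (x₂ : ℝ → EuclideanSpace ℝ (Fin m))
    (hx₁ : ∀ t, HasDerivAt x₁ (f₁ (x₁ t) (-(h₂ (x₂ t)))) t)
    (hx₂ : ∀ t, HasDerivAt x₂ (f₂ (x₂ t) (h₁ (x₁ t))) t)
    (d₁ d₂ : ℝ → ℝ)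
    (hd₁ : ∀ t, HasDerivAt (fun s => V₁ (x₁ s)) (d₁ t) t)
    (hd₂ : ∀ t, HasDerivAt (fun s => V₂ (x₂ s)) (d₂ t) t)
    (hdiss₁ : ∀ t, d₁ t ≤ (γ₁ ^ 2 / 2) * ‖h₂ (x₂ t)‖ ^ 2 - (1 / 2) * ‖h₁ (x₁ t)‖ ^ 2)
    (hdiss₂ : ∀ t, d₂ t ≤ (γ₂ ^ 2 / 2) * ‖h₁ (x₁ t)‖ ^ 2 - (1 / 2) * ‖h₂ (x₂ t)‖ ^ 2) :
    (∀ t, HasDerivAt (fun s => V₁ (x₁ s) + lam ^ 2 * V₂ (x₂ s)) (d₁ t + lam ^ 2 * d₂ t) t ∧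
      d₁ t + lam ^ 2 * d₂ t ≤
        -((1 - lam ^ 2 * γ₂ ^ 2) / 2) * ‖h₁ (x₁ t)‖ ^ 2
        - ((lam ^ 2 - γ₁ ^ 2) / 2) * ‖h₂ (x₂ t)‖ ^ 2 ∧
      d₁ t + lam ^ 2 * d₂ t ≤ 0) ∧
    Antitone (fun s => V₁ (x₁ s) + lam ^ 2 * V₂ (x₂ s)) ∧
    (∀ t₀ : ℝ, ∃ B : ℝ, ∀ t : ℝ, t₀ ≤ t → ‖x₁ t‖ ≤ B ∧ ‖x₂ t‖ ≤ B) := by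

  have hlam0 : 0 < lam := lt_of_le_of_lt hγ₁ hlam₁
  have hlamsq : 0 < lam ^ 2 := by positivity
  have key : ∀ t, d₁ t + lam ^ 2 * d₂ t ≤
      -((1 - lam ^ 2 * γ₂ ^ 2) / 2) * ‖h₁ (x₁ t)‖ ^ 2
      - ((lam ^ 2 - γ₁ ^ 2) / 2) * ‖h₂ (x₂ t)‖ ^ 2 := by
    intro t
    have h1 := hdiss₁ t
    have h2 := hdiss₂ t
    nlinarith [sq_nonneg ‖h₁ (x₁ t)‖, sq_nonneg ‖h₂ (x₂ t)‖, sq_nonneg lam]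
  have keyneg : ∀ t, d₁ t + lam ^ 2 * d₂ t ≤ 0 := by
    intro t
    refine le_trans (key t) ?_
    have c1 : 0 ≤ (1 - lam ^ 2 * γ₂ ^ 2) / 2 := by nlinarith [mul_nonneg hlam0.le hγ₂]
    have c2 : 0 ≤ (lam ^ 2 - γ₁ ^ 2) / 2 := by nlinarith
    nlinarith [sq_nonneg ‖h₁ (x₁ t)‖, sq_nonneg ‖h₂ (x₂ t)‖]
  have hderiv : ∀ t, HasDerivAt (fun s => V₁ (x₁ s) + lam ^ 2 * V₂ (x₂ s))
      (d₁ t + lam ^ 2 * d₂ t) t := fun t => (hd₁ t).add ((hd₂ t).const_mul (lam ^ 2))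
  have hanti : Antitone (fun s => V₁ (x₁ s) + lam ^ 2 * V₂ (x₂ s)) := by
    apply antitone_of_deriv_nonpos
    · exact fun t => (hderiv t).differentiableAt
    · intro t
      rw [(hderiv t).deriv]
      exact keyneg t
  refine ⟨fun t => ⟨hderiv t, key t, keyneg t⟩, hanti, ?_⟩
  intro t₀
  set c : ℝ := V₁ (x₁ t₀) + lam ^ 2 * V₂ (x₂ t₀) with hc
  have hV₁b : ∀ t, t₀ ≤ t → V₁ (x₁ t) ≤ c := by
    intro t ht
    have hm : V₁ (x₁ t) + lam ^ 2 * V₂ (x₂ t) ≤ V₁ (x₁ t₀) + lam ^ 2 * V₂ (x₂ t₀) := hanti ht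
    have h2 := hV₂nonneg (x₂ t)
    nlinarith
  have hV₂b : ∀ t, t₀ ≤ t → V₂ (x₂ t) ≤ c / lam ^ 2 := by
    intro t ht
    have hm : V₁ (x₁ t) + lam ^ 2 * V₂ (x₂ t) ≤ V₁ (x₁ t₀) + lam ^ 2 * V₂ (x₂ t₀) := hanti ht
    have h1 := hV₁nonneg (x₁ t)
    rw [le_div_iff₀ hlamsq]
    nlinarith
  obtain ⟨K₁, hK₁c, hK₁⟩ := (hasBasis_cocompact.eventually_iff).mp
    (hV₁proper.eventually_ge_atTop (c + 1))
  obtain ⟨K₂, hK₂c, hK₂⟩ := (hasBasis_cocompact.eventually_iff).mp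
    (hV₂proper.eventually_ge_atTop (c / lam ^ 2 + 1))
  obtain ⟨R₁, hR₁⟩ := hK₁c.isBounded.subset_closedBall 0
  obtain ⟨R₂, hR₂⟩ := hK₂c.isBounded.subset_closedBall 0
  refine ⟨max R₁ R₂, fun t ht => ⟨?_, ?_⟩⟩
  · have hmem : x₁ t ∈ K₁ := by
      by_contra h
      have := hK₁ h
      have := hV₁b t ht
      linarith
    have := hR₁ hmem
    simpa [Metric.mem_closedBall, dist_eq_norm] using le_trans this (le_max_left R₁ R₂)
  · have hmem : x₂ t ∈ K₂ := by
      by_contra h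
      have := hK₂ h
      have := hV₂b t ht
      linarith
    have := hR₂ hmem
    simpa [Metric.mem_closedBall, dist_eq_norm] using le_trans this (le_max_right R₁ R₂)
end

section
/- Consider the underactuated closed-loop velocity-error system M ṽ' + C(v(t)) ṽ + (D + K_d) ṽ = (0, −m₁₁ ṽ_x ω*(t), 0)ᵀ, with M = diag{m₁₁,m₂₂,m₃₃} > 0, D = diag{d₁₁,d₂₂,d₃₃} > 0, K_d = diag{k_dx, 0, k_dω}, k_dω ≥ 0, C(v) skew-symmetric, and |ω*(t)| ≤ ω_M for all t. If k_dx ≥ m₁₁²ω_M²/(2d₂₂), then V(ṽ) := (1/2)ṽᵀMṽ satisfies V̇ ≤ −(1/2) ṽᵀ D ṽ along all solutions; in particular V̇ < 0 whenever ṽ ≠ 0. -/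
open Matrix

set_option maxHeartbeats 1000000 in
theorem underactuated_PDplus_dissipation
    (m11 m22 m33 d11 d22 d33 kdx kdw ωM : ℝ)
    (hm11 : 0 < m11) (hm22 : 0 < m22) (hm33 : 0 < m33)
    (hd11 : 0 < d11) (hd22 : 0 < d22) (hd33 : 0 < d33)
    (hkdw : 0 ≤ kdw) (hωM : 0 ≤ ωM)
    (hkdx : m11 ^ 2 * ωM ^ 2 / (2 * d22) ≤ kdx)
    (M D K : Matrix (Fin 3) (Fin 3) ℝ)
    (hM : M = Matrix.diagonal ![m11, m22, m33])
    (hD : D = Matrix.diagonal ![d11, d22, d33])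
    (hK : K = Matrix.diagonal ![kdx, 0, kdw])
    (C : (Fin 3 → ℝ) → Matrix (Fin 3) (Fin 3) ℝ)
    (hC : ∀ w : Fin 3 → ℝ, C w =
      !![0, 0, -(m22 * w 1); 0, 0, m11 * w 0; m22 * w 1, -(m11 * w 0), 0])
    (ωstar : ℝ → ℝ) (hωstar : ∀ t : ℝ, |ωstar t| ≤ ωM)
    (v : ℝ → Fin 3 → ℝ) (hv : Continuous v)
    (vt vt' : ℝ → Fin 3 → ℝ)
    (hderiv : ∀ t (i : Fin 3), HasDerivAt (fun s => vt s i) (vt' t i) t)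
    (hdyn : ∀ t, M *ᵥ vt' t + (C (v t)) *ᵥ vt t + (D + K) *ᵥ vt t =
      ![0, -(m11 * vt t 0 * ωstar t), 0]) :
    ∀ t : ℝ, ∃ d : ℝ,
      HasDerivAt (fun s => (1 / 2) * (vt s ⬝ᵥ (M *ᵥ vt s))) d t ∧
      d ≤ -(1 / 2) * (vt t ⬝ᵥ (D *ᵥ vt t)) ∧
      (vt t ≠ 0 → d < 0) := by
  intro t
  have hx := hderiv t 0
  have hy := hderiv t 1
  have hz := hderiv t 2
  have h0 := congrFun (hdyn t) 0
  have h1 := congrFun (hdyn t) 1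
  have h2 := congrFun (hdyn t) 2
  simp [hM, hD, hK, hC, Matrix.add_mulVec, Matrix.mulVec_diagonal, Matrix.mulVec,
    dotProduct, Fin.sum_univ_three, Matrix.vecHead, Matrix.vecTail] at h0 h1 h2
  set x := vt t 0 with hxdef
  set y := vt t 1 with hydef
  set z := vt t 2 with hzdef
  have hω2 : (ωstar t) ^ 2 ≤ ωM ^ 2 :=
    sq_le_sq' (neg_le_of_abs_le (hωstar t)) (le_of_abs_le (hωstar t))
  have hkdx' : m11 ^ 2 * ωM ^ 2 ≤ 2 * d22 * kdx := by
    have := (div_le_iff₀ (by positivity : (0:ℝ) < 2 * d22)).mp hkdx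
    linarith
  have hsum : m11 * x * vt' t 0 + m22 * y * vt' t 1 + m33 * z * vt' t 2 =
      -((d11 + kdx) * x ^ 2 + d22 * y ^ 2 + (d33 + kdw) * z ^ 2) - m11 * x * y * ωstar t := by
    linear_combination x * h0 + y * h1 + z * h2
  have hdot : vt t ⬝ᵥ (D *ᵥ vt t) = d11 * x ^ 2 + d22 * y ^ 2 + d33 * z ^ 2 := by
    simp [hD, Matrix.mulVec, dotProduct, Fin.sum_univ_three, Matrix.diagonal]
    ring
  have hmain : m11 * x * vt' t 0 + m22 * y * vt' t 1 + m33 * z * vt' t 2 ≤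
      -(1 / 2) * (d11 * x ^ 2 + d22 * y ^ 2 + d33 * z ^ 2) := by
    rw [hsum]
    nlinarith [sq_nonneg (m11 * ωstar t * x + d22 * y),
      mul_nonneg (mul_nonneg (sq_nonneg m11) (sub_nonneg.2 hω2)) (sq_nonneg x),
      mul_nonneg (sub_nonneg.2 hkdx') (sq_nonneg x),
      mul_nonneg hkdw (sq_nonneg z), hd22.le, sq_nonneg x, sq_nonneg y, sq_nonneg z,
      mul_nonneg hd11.le (sq_nonneg x), mul_nonneg hd33.le (sq_nonneg z)]
  refine ⟨m11 * x * vt' t 0 + m22 * y * vt' t 1 + m33 * z * vt' t 2, ?_, by rw [hdot]; exact hmain, ?_⟩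
  · have H : HasDerivAt
        (fun s => (1/2) * (m11 * (vt s 0 * vt s 0) + (m22 * (vt s 1 * vt s 1)
          + m33 * (vt s 2 * vt s 2))))
        ((1/2) * (m11 * (vt' t 0 * x + x * vt' t 0) + (m22 * (vt' t 1 * y + y * vt' t 1)
          + m33 * (vt' t 2 * z + z * vt' t 2)))) t := by
      exact (((hx.mul hx).const_mul m11).add
        (((hy.mul hy).const_mul m22).add ((hz.mul hz).const_mul m33))).const_mul (1/2)
    have heq : (fun s => (1 / 2) * (vt s ⬝ᵥ (M *ᵥ vt s))) =
        (fun s => (1/2) * (m11 * (vt s 0 * vt s 0) + (m22 * (vt s 1 * vt s 1)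
          + m33 * (vt s 2 * vt s 2)))) := by
      funext s
      simp [hM, Matrix.mulVec, dotProduct, Fin.sum_univ_three, Matrix.diagonal]
      ring
    rw [heq]
    convert H using 1
    ring
  · intro hne
    have hcases : x ≠ 0 ∨ y ≠ 0 ∨ z ≠ 0 := by
      by_contra hcon
      push_neg at hcon
      apply hne
      funext i
      fin_cases i
      · exact hcon.1
      · exact hcon.2.1
      · exact hcon.2.2
    have hpos : 0 < d11 * x ^ 2 + d22 * y ^ 2 + d33 * z ^ 2 := by
      rcases hcases with h | h | h <;>
        nlinarith [mul_self_pos.mpr h, sq_nonneg x, sq_nonneg y, sq_nonneg z]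
    linarith
end

section
/- Suppose V₁, V₂ : ℝ → ℝ≥0 are C¹ along solutions and satisfy V̇₁ ≤ −(1/2)|e_p|² + (γ₁²/2)v̄², V̇₂ ≤ −(1/2)v̄² + (γ₂²/2)e_x², with |e_x| ≤ |e_p| and γ₁γ₂ < 1, and additionally c₁|e_p|² ≤ V₁, c₂v̄² ≤ V₂ for constants c₁, c₂ > 0. Then for any λ ∈ (γ₁, 1/γ₂), V := V₁ + λ²V₂ satisfies V̇ ≤ −ε(|e_p|² + v̄²) along solutions for ε := (1/2)min{1 − λ²γ₂², λ² − γ₁²} > 0, and hence V(t) ≤ V(0)e^{−(ε/c)t} with c := max{upper quadratic bounds}, giving exponential convergence of (e_p, v̄) to zero whenever V₁, V₂ are also quadratically upper bounded. -/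
/-!
Weighting the second storage function by `λ²` lets the dissipation of each subsystem absorb
the supply term of the other: `V̇₁ + λ² V̇₂ ≤ -½(1 - λ²γ₂²)|e_p|² - ½(λ² - γ₁²)v̄²`, and both
coefficients are positive exactly when `γ₁ < λ < 1/γ₂`. Since `V ≤ c(|e_p|² + v̄²)`, this gives `V̇ ≤ -(ε/c) V`,
and Grönwall's inequality yields the exponential bound.
-/

open Real

theorem le_mul_exp_of_hasDerivAt_le_neg_mul {f f' : ℝ → ℝ} {k a t : ℝ}
    (hf : ∀ x, HasDerivAt f (f' x) x) (hbound : ∀ x, f' x ≤ -k * f x) (ht : a ≤ t) :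
    f t ≤ f a * exp (-k * (t - a)) := by
  have hgronwall := le_gronwallBound_of_liminf_deriv_right_le (δ := f a) (K := -k) (ε := 0)
    (fun x _ => (hf x).continuousAt.continuousWithinAt)
    (fun x _ _ hr => (hf x).hasDerivWithinAt.liminf_right_slope_le hr) le_rfl
    (fun x _ => by simpa using hbound x) t ⟨ht, le_rfl⟩
  rwa [gronwallBound_ε0] at hgronwall

theorem one_sub_sq_mul_sq_pos {lam γ : ℝ} (hlam : 0 ≤ lam) (hγ : 0 ≤ γ)
    (h : lam < 1 / γ ∨ γ = 0) : 0 < 1 - lam ^ 2 * γ ^ 2 := by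
  rcases h with h | rfl
  · rcases hγ.eq_or_lt with rfl | hγ
    · norm_num
    · have : lam * γ < 1 := (lt_div_iff₀ hγ).mp h
      nlinarith [mul_nonneg hlam hγ.le]
  · norm_num

theorem add_sq_mul_le_neg_mul_of_dissipation {d₁ d₂ p x v γ₁ γ₂ lam ε : ℝ}
    (hx : x ≤ p) (hp : 0 ≤ p) (hv : 0 ≤ v)
    (hd₁ : d₁ ≤ -(1 / 2) * p + (γ₁ ^ 2 / 2) * v)
    (hd₂ : d₂ ≤ -(1 / 2) * v + (γ₂ ^ 2 / 2) * x)
    (hε₁ : ε ≤ (1 / 2) * (1 - lam ^ 2 * γ₂ ^ 2)) (hε₂ : ε ≤ (1 / 2) * (lam ^ 2 - γ₁ ^ 2)) :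
    d₁ + lam ^ 2 * d₂ ≤ -ε * (p + v) := by
  have hd₂' := mul_le_mul_of_nonneg_left hd₂ (sq_nonneg lam)
  have hx' := mul_le_mul_of_nonneg_left hx (sq_nonneg (lam * γ₂))
  nlinarith [mul_le_mul_of_nonneg_right hε₁ hp, mul_le_mul_of_nonneg_right hε₂ hv]

theorem add_sq_mul_le_max_mul {V₁ V₂ p v C₁ C₂ lam : ℝ} (hp : 0 ≤ p) (hv : 0 ≤ v)
    (h₁ : V₁ ≤ C₁ * p) (h₂ : V₂ ≤ C₂ * v) :
    V₁ + lam ^ 2 * V₂ ≤ max C₁ (lam ^ 2 * C₂) * (p + v) := by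
  have h₂' := mul_le_mul_of_nonneg_left h₂ (sq_nonneg lam)
  nlinarith [mul_le_mul_of_nonneg_right (le_max_left C₁ (lam ^ 2 * C₂)) hp,
    mul_le_mul_of_nonneg_right (le_max_right C₁ (lam ^ 2 * C₂)) hv]

theorem neg_mul_le_neg_div_mul_of_le_mul {ε c V q : ℝ} (hε : 0 ≤ ε) (hc : 0 < c)
    (hV : V ≤ c * q) : -ε * q ≤ -(ε / c) * V := by
  have : ε / c * V ≤ ε * q := by
    calc ε / c * V ≤ ε / c * (c * q) := by gcongr
      _ = ε * q := by field_simp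
  linarith

theorem combined_strict_lyapunov_general
    (ex ey vbar V₁ V₂ d₁ d₂ : ℝ → ℝ)
    (γ₁ γ₂ lam C₁ C₂ ε c : ℝ)
    (hγ₁ : 0 ≤ γ₁) (hγ₂ : 0 ≤ γ₂)
    (hlam₁ : γ₁ < lam) (hlam₂ : lam < 1 / γ₂ ∨ γ₂ = 0)
    (hd₁ : ∀ t, HasDerivAt V₁ (d₁ t) t)
    (hd₂ : ∀ t, HasDerivAt V₂ (d₂ t) t)
    (hdiss₁ : ∀ t, d₁ t ≤ -(1 / 2) * ((ex t) ^ 2 + (ey t) ^ 2) + (γ₁ ^ 2 / 2) * (vbar t) ^ 2)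
    (hdiss₂ : ∀ t, d₂ t ≤ -(1 / 2) * (vbar t) ^ 2 + (γ₂ ^ 2 / 2) * (ex t) ^ 2)
    (hup₁ : ∀ t, V₁ t ≤ C₁ * ((ex t) ^ 2 + (ey t) ^ 2))
    (hup₂ : ∀ t, V₂ t ≤ C₂ * (vbar t) ^ 2)
    (hε : ε = (1 / 2) * min (1 - lam ^ 2 * γ₂ ^ 2) (lam ^ 2 - γ₁ ^ 2))
    (hc : c = max C₁ (lam ^ 2 * C₂)) (hcpos : 0 < c) :
    (0 < ε) ∧
    (∀ t, d₁ t + lam ^ 2 * d₂ t ≤ -ε * ((ex t) ^ 2 + (ey t) ^ 2 + (vbar t) ^ 2)) ∧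
    (∀ t : ℝ, 0 ≤ t →
      V₁ t + lam ^ 2 * V₂ t ≤ (V₁ 0 + lam ^ 2 * V₂ 0) * Real.exp (-(ε / c) * t)) := by
  have hlam : 0 ≤ lam := hγ₁.trans hlam₁.le
  have hεpos : 0 < ε := hε ▸ mul_pos one_half_pos
    (lt_min (one_sub_sq_mul_sq_pos hlam hγ₂ hlam₂) (sub_pos.2 (pow_lt_pow_left₀ hlam₁ hγ₁ two_ne_zero)))
  have hdiss : ∀ t, d₁ t + lam ^ 2 * d₂ t ≤ -ε * ((ex t) ^ 2 + (ey t) ^ 2 + (vbar t) ^ 2) :=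
    fun t => add_sq_mul_le_neg_mul_of_dissipation (le_add_of_nonneg_right (sq_nonneg _))
      (by positivity) (sq_nonneg _) (hdiss₁ t) (hdiss₂ t)
      (hε ▸ mul_le_mul_of_nonneg_left (min_le_left _ _) one_half_pos.le)
      (hε ▸ mul_le_mul_of_nonneg_left (min_le_right _ _) one_half_pos.le)
  refine ⟨hεpos, hdiss, fun t ht => ?_⟩
  have hup : ∀ t, V₁ t + lam ^ 2 * V₂ t ≤ c * ((ex t) ^ 2 + (ey t) ^ 2 + (vbar t) ^ 2) :=
    fun t => hc ▸ add_sq_mul_le_max_mul (by positivity) (sq_nonneg _) (hup₁ t) (hup₂ t)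
  simpa using le_mul_exp_of_hasDerivAt_le_neg_mul (f := fun t => V₁ t + lam ^ 2 * V₂ t)
    (fun t => (hd₁ t).add ((hd₂ t).const_mul _))
    (fun t => (hdiss t).trans (neg_mul_le_neg_div_mul_of_le_mul hεpos.le hcpos (hup t))) ht

theorem combined_strict_lyapunov
    (ex ey vbar V₁ V₂ d₁ d₂ : ℝ → ℝ)
    (γ₁ γ₂ lam c₁ c₂ C₁ C₂ ε c : ℝ)
    (hγ₁ : 0 ≤ γ₁) (hγ₂ : 0 ≤ γ₂) (hsg : γ₁ * γ₂ < 1)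
    (hlam₁ : γ₁ < lam) (hlam₂ : lam < 1 / γ₂ ∨ γ₂ = 0)
    (hc₁ : 0 < c₁) (hc₂ : 0 < c₂)
    (hV₁nonneg : ∀ t, 0 ≤ V₁ t) (hV₂nonneg : ∀ t, 0 ≤ V₂ t)
    (hd₁ : ∀ t, HasDerivAt V₁ (d₁ t) t)
    (hd₂ : ∀ t, HasDerivAt V₂ (d₂ t) t)
    (hdiss₁ : ∀ t, d₁ t ≤ -(1 / 2) * ((ex t) ^ 2 + (ey t) ^ 2) + (γ₁ ^ 2 / 2) * (vbar t) ^ 2)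
    (hdiss₂ : ∀ t, d₂ t ≤ -(1 / 2) * (vbar t) ^ 2 + (γ₂ ^ 2 / 2) * (ex t) ^ 2)
    (hlow₁ : ∀ t, c₁ * ((ex t) ^ 2 + (ey t) ^ 2) ≤ V₁ t)
    (hlow₂ : ∀ t, c₂ * (vbar t) ^ 2 ≤ V₂ t)
    (hup₁ : ∀ t, V₁ t ≤ C₁ * ((ex t) ^ 2 + (ey t) ^ 2))
    (hup₂ : ∀ t, V₂ t ≤ C₂ * (vbar t) ^ 2)
    (hε : ε = (1 / 2) * min (1 - lam ^ 2 * γ₂ ^ 2) (lam ^ 2 - γ₁ ^ 2))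
    (hc : c = max C₁ (lam ^ 2 * C₂)) (hcpos : 0 < c) :
    (0 < ε) ∧
    (∀ t, d₁ t + lam ^ 2 * d₂ t ≤ -ε * ((ex t) ^ 2 + (ey t) ^ 2 + (vbar t) ^ 2)) ∧
    (∀ t : ℝ, 0 ≤ t →
      V₁ t + lam ^ 2 * V₂ t ≤ (V₁ 0 + lam ^ 2 * V₂ 0) * Real.exp (-(ε / c) * t)) :=
  combined_strict_lyapunov_general ex ey vbar V₁ V₂ d₁ d₂ γ₁ γ₂ lam C₁ C₂ ε c hγ₁ hγ₂ hlam₁ hlam₂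
    hd₁ hd₂ hdiss₁ hdiss₂ hup₁ hup₂ hε hc hcpos
end
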